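/- Assume (A1) and (A2), and fix t ∈ {0,1}. Let π† : 𝒳 → [ε, 1−ε] be measurable, let τ†₁, τ†₀ : 𝒳 → ℝ be bounded measurable, and set π̃(R,X) = R·π_{t1} + (1−R)·π†(X) and τ̃(R,X) = R·τ†₁(X) + (1−R)·τ†₀(X). Then the remainder term of the one-step expansion satisfies the second-order identity E[ 1{T=t}·Y / π̃(R,X) + (1 − 1{T=t} / π̃(R,X))·τ̃(R,X) ] − μ_t = E[ (1−R)·( π_t(0,X)/π†(X) − 1 )·( τ_t(0,X) − τ†₀(X) ) ]. -/

import Mathlib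

open MeasureTheory ProbabilityTheory Set

noncomputable section

/-- The σ-algebra on `Ω` generated by the map `X`. -/
def sigmaX {Ω 𝒳 : Type*} [MeasurableSpace 𝒳] (X : Ω → 𝒳) : MeasurableSpace Ω :=
  MeasurableSpace.comap X inferInstance

/-- Conditional expectation of `f` given the σ-algebra `m'` under the measure `μ`. -/
def cexp {Ω : Type*} (m' : MeasurableSpace Ω) {m0 : MeasurableSpace Ω} (μ : Measure Ω)
    (f : Ω → ℝ) : Ω → ℝ :=
  MeasureTheory.condExp m' μ f

/-- Conditional probability of the event `s` given the σ-algebra `m'`, as a function. -/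
def cprob {Ω : Type*} (m' : MeasurableSpace Ω) {m0 : MeasurableSpace Ω} (μ : Measure Ω)
    (s : Set Ω) : Ω → ℝ :=
  cexp m' μ (s.indicator fun _ => (1 : ℝ))

/-- `f` and `g` are conditionally independent given the σ-algebra `m'` under `μ` :
conditional probabilities of joint events factorize. -/
def CondIndepFunGiven {Ω β γ : Type*} [MeasurableSpace β]
    [MeasurableSpace γ] (m' : MeasurableSpace Ω) {m0 : MeasurableSpace Ω}
    (f : Ω → β) (g : Ω → γ) (μ : Measure Ω) : Prop :=
  ∀ s u, MeasurableSet s → MeasurableSet u →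
    cprob m' μ (f ⁻¹' s ∩ g ⁻¹' u)
      =ᵐ[μ] fun ω => cprob m' μ (f ⁻¹' s) ω * cprob m' μ (g ⁻¹' u) ω

/-
Split both expectations along the two arms `R = 1` and `R = 0`.

On the trial arm the weight `π̃ = π_{t1}` is the true propensity and `T` is independent of
`(Y₁, Y₀, X)`, so the correction term `(1 - 1{T=t}/π_{t1}) τ†₁(X)` has mean zero and the arm
contributes exactly `E[Y_t | R = 1]`.

On the observational arm, (A2) gives `E[1{T=t} Φ(X, Y₁, Y₀)] = E[π_t(0,X) Φ(X, Y₁, Y₀)]` for every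
measurable `Φ`: the laws of `(X, Y₁, Y₀)` under `P(· ∩ {T = t})` and under the density
`π_t(0,X)` agree on rectangles, hence everywhere. Replacing `1{T=t}` by `π_t(0,X)` and then `Y_t`
by `τ_t(0,X)` (tower property) turns the remainder into the product of the two nuisance errors.
-/

lemma abs_div_le_inv_of_abs_le_one {u v c : ℝ} (hu : |u| ≤ 1) (hc : 0 < c) (hcv : c ≤ v) :
    |u / v| ≤ c⁻¹ := by
  rw [abs_div, abs_of_pos (hc.trans_le hcv), ← one_div]
  exact div_le_div₀ zero_le_one hu hc hcv

lemma abs_ite_one_zero_le_one (p : Prop) [Decidable p] : |if p then (1 : ℝ) else 0| ≤ 1 := by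
  split_ifs <;> simp

lemma ite_mul_eq_ite_mul_of_consistency {Ω : Type*} {T Y Y₁ Y₀ : Ω → ℝ} {Yt : ℝ → Ω → ℝ}
    {t : ℝ} (ht : t = 0 ∨ t = 1) (hY : Y = fun ω => T ω * Y₁ ω + (1 - T ω) * Y₀ ω)
    (hYt1 : Yt 1 = Y₁) (hYt0 : Yt 0 = Y₀) (ω : Ω) :
    (if T ω = t then (1 : ℝ) else 0) * Y ω = (if T ω = t then 1 else 0) * Yt t ω := by
  split_ifs with h
  · rcases ht with rfl | rfl <;> simp [hY, hYt0, hYt1, h]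
  · simp

section CondProb

variable {Ω : Type*} {m m0 : MeasurableSpace Ω} {μ : Measure Ω} {s : Set Ω}

lemma stronglyMeasurable_cprob : StronglyMeasurable[m] (cprob m μ s) :=
  stronglyMeasurable_condExp

lemma integrable_cprob : Integrable (cprob m μ s) μ :=
  integrable_condExp

lemma cprob_nonneg : ∀ᵐ ω ∂μ, 0 ≤ cprob m μ s ω :=
  condExp_nonneg (.of_forall fun _ => indicator_nonneg (fun _ _ => zero_le_one) _)

lemma cprob_le_one [IsFiniteMeasure μ] (hm : m ≤ m0) (hs : MeasurableSet s) :
    ∀ᵐ ω ∂μ, cprob m μ s ω ≤ 1 := by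
  have h := condExp_mono (m := m) (μ := μ) ((integrable_const (1 : ℝ)).indicator hs)
    (integrable_const 1) (.of_forall fun ω => indicator_le_self' (fun _ _ => zero_le_one) ω)
  rwa [condExp_const hm] at h

lemma abs_cprob_le_one [IsFiniteMeasure μ] (hm : m ≤ m0) (hs : MeasurableSet s) :
    ∀ᵐ ω ∂μ, |cprob m μ s ω| ≤ 1 := by
  filter_upwards [cprob_nonneg, cprob_le_one hm hs] with ω h0 h1
  rwa [abs_of_nonneg h0]

lemma integral_cprob [IsFiniteMeasure μ] (hm : m ≤ m0) (hs : MeasurableSet s) :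
    ∫ ω, cprob m μ s ω ∂μ = μ.real s := by
  rw [cprob, cexp, integral_condExp hm]
  exact integral_indicator_one hs

lemma le_measureReal_of_ae_le_cprob [IsProbabilityMeasure μ] (hm : m ≤ m0)
    (hs : MeasurableSet s) {c : ℝ} (hc : ∀ᵐ ω ∂μ, c ≤ cprob m μ s ω) : c ≤ μ.real s := by
  rw [← integral_cprob hm hs]
  simpa [cprob, cexp] using integral_mono_ae (integrable_const c) integrable_condExp hc

lemma setIntegral_mul_condExp [IsFiniteMeasure μ] (hm : m ≤ m0) {b g : Ω → ℝ}
    (hb : StronglyMeasurable[m] b) {C : ℝ} (hbC : ∀ᵐ ω ∂μ, |b ω| ≤ C) (hg : Integrable g μ)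
    (hS : MeasurableSet[m] s) :
    ∫ ω in s, b ω * μ[g|m] ω ∂μ = ∫ ω in s, b ω * g ω ∂μ := by
  have hbg : Integrable (b * g) μ :=
    hg.bdd_mul (hb.mono hm).aestronglyMeasurable (by simpa only [Real.norm_eq_abs] using hbC)
  calc ∫ ω in s, b ω * μ[g|m] ω ∂μ = ∫ ω in s, μ[b * g|m] ω ∂μ :=
        setIntegral_congr_ae (hm s hS)
          ((condExp_mul_of_stronglyMeasurable_left hb hbg hg).mono fun ω h _ => h.symm)
    _ = ∫ ω in s, b ω * g ω ∂μ := setIntegral_condExp hm hbg hS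

-- `aipw`: the augmented inverse-propensity-weighted integrand `e Z / q + (1 - e / q) W`.
lemma integral_aipw_sub_integral_eq_integral_mul_cexp_sub [IsFiniteMeasure μ] (hm : m ≤ m0)
    {e q Z W : Ω → ℝ} (he : StronglyMeasurable[m] e) (he1 : ∀ᵐ ω ∂μ, |e ω| ≤ 1)
    (hq : StronglyMeasurable[m] q) {c : ℝ} (hc : 0 < c) (hqc : ∀ ω, c ≤ q ω)
    (hZ : Integrable Z μ) (hW : StronglyMeasurable[m] W) (hWi : Integrable W μ) :
    ∫ ω, (e ω * Z ω / q ω + (1 - e ω / q ω) * W ω) ∂μ - ∫ ω, Z ω ∂μ =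
      ∫ ω, (e ω / q ω - 1) * (cexp m μ Z ω - W ω) ∂μ := by
  have hb : StronglyMeasurable[m] fun ω => e ω / q ω - 1 :=
    ((he.measurable.div hq.measurable).sub measurable_const).stronglyMeasurable
  have hbC : ∀ᵐ ω ∂μ, |e ω / q ω - 1| ≤ c⁻¹ + 1 :=
    he1.mono fun ω h => (abs_sub _ _).trans
      (add_le_add (abs_div_le_inv_of_abs_le_one h hc (hqc ω)) abs_one.le)
  have hZW : Integrable (fun ω => Z ω - W ω) μ := hZ.sub hWi
  have hcond : μ[fun ω => Z ω - W ω|m] =ᵐ[μ] fun ω => cexp m μ Z ω - W ω := by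
    refine (condExp_sub hZ hWi m).trans ?_
    rw [condExp_of_stronglyMeasurable hm hW hWi]
    rfl
  calc _ = ∫ ω, (e ω / q ω - 1) * (Z ω - W ω) ∂μ := by
        rw [sub_eq_iff_eq_add, ← integral_add (hZW.bdd_mul (hb.mono hm).aestronglyMeasurable
          (by simpa only [Real.norm_eq_abs] using hbC)) hZ]
        congr 1 with ω
        ring
    _ = ∫ ω, (e ω / q ω - 1) * μ[fun ω => Z ω - W ω|m] ω ∂μ := by
        simpa only [Measure.restrict_univ] using
          (setIntegral_mul_condExp hm hb hbC hZW MeasurableSet.univ).symm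
    _ = _ := integral_congr_ae (hcond.mono fun ω h => congrArg ((e ω / q ω - 1) * ·) h)

end CondProb

section Cond

variable {Ω : Type*} {m0 : MeasurableSpace Ω} {μ : Measure Ω} {R : Ω → ℝ}

lemma MeasureTheory.Integrable.cond {f : Ω → ℝ} (hf : Integrable f μ) {s : Set Ω}
    (hs : μ s ≠ 0) : Integrable f μ[|s] :=
  hf.restrict.smul_measure (ENNReal.inv_ne_top.mpr hs)

lemma measure_setOf_eq_zero_ne_zero [IsProbabilityMeasure μ] (hR : Measurable R)
    (hRbin : ∀ ω, R ω = 0 ∨ R ω = 1) (h : μ {ω | R ω = 1} < 1) : μ {ω | R ω = 0} ≠ 0 := by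
  have hA : MeasurableSet {ω | R ω = 1} := hR (measurableSet_singleton 1)
  refine (measure_pos_of_superset (s := {ω | R ω = 1}ᶜ)
    (fun ω h => (hRbin ω).resolve_right h) ?_).ne'
  rw [prob_compl_eq_one_sub hA]
  exact (tsub_pos_of_lt h).ne'

variable [IsFiniteMeasure μ]

lemma integrable_comp_of_abs_le {𝒳 : Type*} [MeasurableSpace 𝒳] {X : Ω → 𝒳}
    (hX : Measurable X) {f : 𝒳 → ℝ} (hf : Measurable f) (hfb : ∃ C, ∀ x, |f x| ≤ C) :
    Integrable (fun ω => f (X ω)) μ :=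
  let ⟨C, hC⟩ := hfb
  .of_bound (hf.comp hX).aestronglyMeasurable C (.of_forall fun ω => hC (X ω))

lemma setIntegral_eq_measureReal_mul_integral_cond (s : Set Ω) (f : Ω → ℝ) :
    ∫ ω in s, f ω ∂μ = μ.real s * ∫ ω, f ω ∂μ[|s] := by
  rcases eq_or_ne (μ s) 0 with hs | hs
  · simp [Measure.restrict_eq_zero.mpr hs, measureReal_def, hs]
  · rw [ProbabilityTheory.cond, integral_smul_measure, ENNReal.toReal_inv, smul_eq_mul,
      ← mul_assoc, measureReal_def,
      mul_inv_cancel₀ (ENNReal.toReal_ne_zero.mpr ⟨hs, measure_ne_top _ _⟩), one_mul]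

lemma integral_eq_cond_add_cond (hR : Measurable R) (hRbin : ∀ ω, R ω = 0 ∨ R ω = 1)
    {F F₁ F₀ : Ω → ℝ} (hF₁ : ∀ ω, R ω = 1 → F ω = F₁ ω) (hF₀ : ∀ ω, R ω = 0 → F ω = F₀ ω)
    (hF₁i : Integrable F₁ μ) (hF₀i : Integrable F₀ μ) :
    ∫ ω, F ω ∂μ = μ.real {ω | R ω = 1} * ∫ ω, F₁ ω ∂μ[|{ω | R ω = 1}]
      + μ.real {ω | R ω = 0} * ∫ ω, F₀ ω ∂μ[|{ω | R ω = 0}] := by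
  have hA : MeasurableSet {ω | R ω = 1} := hR (measurableSet_singleton 1)
  have hA₀ : {ω | R ω = 0} = {ω | R ω = 1}ᶜ := by
    ext ω
    rcases hRbin ω with h | h <;> simp [h]
  have hF : F = {ω | R ω = 1}.indicator F₁ + {ω | R ω = 1}ᶜ.indicator F₀ := by
    ext ω
    rcases hRbin ω with h | h <;> simp [h, hF₀, hF₁]
  have hFi : Integrable F μ := hF ▸ (hF₁i.indicator hA).add (hF₀i.indicator hA.compl)
  rw [← setIntegral_eq_measureReal_mul_integral_cond,
    ← setIntegral_eq_measureReal_mul_integral_cond, hA₀, ← integral_add_compl hA hFi]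
  congr 1
  · exact setIntegral_congr_fun hA fun ω h => hF₁ ω h
  · exact setIntegral_congr_fun hA.compl fun ω h => hF₀ ω ((hRbin ω).resolve_right h)

lemma integral_one_sub_mul_eq_cond (hR : Measurable R) (hRbin : ∀ ω, R ω = 0 ∨ R ω = 1)
    (g : Ω → ℝ) :
    ∫ ω, (1 - R ω) * g ω ∂μ = μ.real {ω | R ω = 0} * ∫ ω, g ω ∂μ[|{ω | R ω = 0}] := by
  have hA₀ : MeasurableSet {ω | R ω = 0} := hR (measurableSet_singleton 0)
  rw [← setIntegral_eq_measureReal_mul_integral_cond, ← integral_indicator hA₀]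
  congr 1 with ω
  rcases hRbin ω with h | h <;> simp [h]

end Cond

section CondIndep

variable {Ω 𝒳 β γ : Type*} {m m0 : MeasurableSpace Ω} [MeasurableSpace 𝒳] [MeasurableSpace β]
  [MeasurableSingletonClass β] [MeasurableSpace γ] {μ : Measure Ω} [IsFiniteMeasure μ]
  {X : Ω → 𝒳} {T : Ω → β} {G : Ω → γ} {t : β}

lemma measureReal_inter_eq_setIntegral_cprob (hm : m ≤ m0) (hT : Measurable T)
    (hG : Measurable G) (hCI : CondIndepFunGiven m T G μ) {S : Set Ω} (hS : MeasurableSet[m] S)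
    {u : Set γ} (hu : MeasurableSet u) :
    μ.real (S ∩ G ⁻¹' u ∩ {ω | T ω = t}) =
      ∫ ω in S ∩ G ⁻¹' u, cprob m μ {ω | T ω = t} ω ∂μ := by
  have hA : MeasurableSet {ω | T ω = t} := hT (measurableSet_singleton t)
  have hU : MeasurableSet (G ⁻¹' u) := hG hu
  have hAU : Integrable (({ω | T ω = t} ∩ G ⁻¹' u).indicator fun _ => (1 : ℝ)) μ :=
    (integrable_const 1).indicator (hA.inter hU)
  calc μ.real (S ∩ G ⁻¹' u ∩ {ω | T ω = t})
      = ∫ ω in S, ({ω | T ω = t} ∩ G ⁻¹' u).indicator (fun _ => (1 : ℝ)) ω ∂μ := by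
        rw [integral_indicator_const 1 (hA.inter hU), smul_eq_mul, mul_one,
          measureReal_restrict_apply (hA.inter hU),
          inter_comm, inter_assoc, inter_comm (G ⁻¹' u)]
    _ = ∫ ω in S, cprob m μ ({ω | T ω = t} ∩ G ⁻¹' u) ω ∂μ :=
        (setIntegral_condExp hm hAU hS).symm
    _ = ∫ ω in S, cprob m μ {ω | T ω = t} ω * μ[(G ⁻¹' u).indicator fun _ => 1|m] ω ∂μ :=
        setIntegral_congr_ae (hm S hS)
          ((hCI {t} u (measurableSet_singleton t) hu).mono fun _ h _ => h)
    _ = ∫ ω in S, cprob m μ {ω | T ω = t} ω * (G ⁻¹' u).indicator (fun _ => 1) ω ∂μ :=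
        setIntegral_mul_condExp hm stronglyMeasurable_cprob (abs_cprob_le_one hm hA)
          ((integrable_const 1).indicator hU) hS
    _ = ∫ ω in S ∩ G ⁻¹' u, cprob m μ {ω | T ω = t} ω ∂μ := by
        rw [← setIntegral_indicator hU]
        simp_rw [← indicator_mul_right, mul_one]

lemma map_restrict_eq_map_withDensity_cprob (hm : m ≤ m0) (hX : Measurable[m] X)
    (hT : Measurable T) (hG : Measurable G) (hCI : CondIndepFunGiven m T G μ) :
    (μ.restrict {ω | T ω = t}).map (fun ω => (X ω, G ω)) =
      (μ.withDensity fun ω => ENNReal.ofReal (cprob m μ {ω | T ω = t} ω)).map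
        (fun ω => (X ω, G ω)) := by
  have hXG : Measurable fun ω => (X ω, G ω) := (hX.mono hm le_rfl).prodMk hG
  refine Measure.ext_prod fun {s u} hs hu => ?_
  rw [Measure.map_apply hXG (hs.prod hu), Measure.map_apply hXG (hs.prod hu),
    Measure.restrict_apply (hXG (hs.prod hu)), withDensity_apply _ (hXG (hs.prod hu)),
    mk_preimage_prod, ← ofReal_integral_eq_lintegral_ofReal integrable_cprob.integrableOn
      (ae_restrict_of_ae cprob_nonneg),
    ← measureReal_inter_eq_setIntegral_cprob hm hT hG hCI (hX hs) hu, ofReal_measureReal]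

lemma integral_ite_mul_eq_integral_cprob_mul [DecidableEq β] (hm : m ≤ m0)
    (hX : Measurable[m] X) (hT : Measurable T) (hG : Measurable G)
    (hCI : CondIndepFunGiven m T G μ) {Φ : 𝒳 × γ → ℝ} (hΦ : Measurable Φ) :
    ∫ ω, (if T ω = t then 1 else 0) * Φ (X ω, G ω) ∂μ =
      ∫ ω, cprob m μ {ω | T ω = t} ω * Φ (X ω, G ω) ∂μ := by
  have hXG : Measurable fun ω => (X ω, G ω) := (hX.mono hm le_rfl).prodMk hG
  have hA : MeasurableSet {ω | T ω = t} := hT (measurableSet_singleton t)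
  have hπ : Measurable (cprob m μ {ω | T ω = t}) :=
    stronglyMeasurable_cprob.measurable.mono hm le_rfl
  calc ∫ ω, (if T ω = t then 1 else 0) * Φ (X ω, G ω) ∂μ
      = ∫ ω in {ω | T ω = t}, Φ (X ω, G ω) ∂μ := by
        rw [← integral_indicator hA]
        simp only [indicator_apply, mem_ofPred_eq, ite_mul, one_mul, zero_mul]
    _ = ∫ p, Φ p ∂(μ.restrict {ω | T ω = t}).map (fun ω => (X ω, G ω)) :=
        (integral_map hXG.aemeasurable hΦ.aestronglyMeasurable).symm
    _ = ∫ ω, Φ (X ω, G ω)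
          ∂μ.withDensity fun ω => ENNReal.ofReal (cprob m μ {ω | T ω = t} ω) := by
        rw [map_restrict_eq_map_withDensity_cprob hm hX hT hG hCI,
          integral_map hXG.aemeasurable hΦ.aestronglyMeasurable]
    _ = ∫ ω, cprob m μ {ω | T ω = t} ω * Φ (X ω, G ω) ∂μ := by
        rw [integral_withDensity_eq_integral_toReal_smul hπ.ennreal_ofReal
          (.of_forall fun _ => ENNReal.ofReal_lt_top)]
        refine integral_congr_ae ?_
        filter_upwards [cprob_nonneg (m := m) (μ := μ) (s := {ω | T ω = t})] with ω h
        simp only [ENNReal.toReal_ofReal h, smul_eq_mul]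

lemma integral_aipw_ite_eq_integral_aipw_cprob [DecidableEq β] (hm : m ≤ m0)
    (hX : Measurable[m] X) (hT : Measurable T) (hG : Measurable G)
    (hCI : CondIndepFunGiven m T G μ) {ψ : γ → ℝ} (hψ : Measurable ψ)
    (hZ : Integrable (fun ω => ψ (G ω)) μ) {π : 𝒳 → ℝ} (hπ : Measurable π) {c : ℝ} (hc : 0 < c)
    (hπc : ∀ x, c ≤ π x) {τ : 𝒳 → ℝ} (hτ : Measurable τ) (hτb : ∃ C, ∀ x, |τ x| ≤ C) :
    ∫ ω, ((if T ω = t then 1 else 0) * ψ (G ω) / π (X ω)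
        + (1 - (if T ω = t then 1 else 0) / π (X ω)) * τ (X ω)) ∂μ =
      ∫ ω, (cprob m μ {ω | T ω = t} ω * ψ (G ω) / π (X ω)
        + (1 - cprob m μ {ω | T ω = t} ω / π (X ω)) * τ (X ω)) ∂μ := by
  have hA : MeasurableSet {ω | T ω = t} := hT (measurableSet_singleton t)
  have hτX : Integrable (fun ω => τ (X ω)) μ :=
    integrable_comp_of_abs_le (hX.mono hm le_rfl) hτ hτb
  have hsplit : ∀ f : Ω → ℝ, Measurable f → (∀ᵐ ω ∂μ, |f ω| ≤ 1) →
      ∫ ω, (f ω * ψ (G ω) / π (X ω) + (1 - f ω / π (X ω)) * τ (X ω)) ∂μ =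
        ∫ ω, τ (X ω) ∂μ + ∫ ω, f ω * ((ψ (G ω) - τ (X ω)) / π (X ω)) ∂μ := by
    intro f hf hf1
    have hfW : Integrable (fun ω => f ω * ((ψ (G ω) - τ (X ω)) / π (X ω))) μ := by
      refine ((hZ.sub hτX).bdd_mul (f := fun ω => f ω / π (X ω))
        (hf.div (hπ.comp (hX.mono hm le_rfl))).aestronglyMeasurable
        (hf1.mono fun ω h => abs_div_le_inv_of_abs_le_one h hc (hπc _))).congr
        (.of_forall fun ω => ?_)
      simp only [Pi.sub_apply]
      ring
    rw [← integral_add hτX hfW]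
    congr 1 with ω
    ring
  rw [hsplit _ (Measurable.ite hA measurable_const measurable_const)
      (.of_forall fun _ => abs_ite_one_zero_le_one _),
    hsplit _ (stronglyMeasurable_cprob.measurable.mono hm le_rfl) (abs_cprob_le_one hm hA)]
  congr 1
  exact integral_ite_mul_eq_integral_cprob_mul hm hX hT hG hCI
    (Φ := fun p => (ψ p.2 - τ p.1) / π p.1)
    (((hψ.comp measurable_snd).sub (hτ.comp measurable_fst)).div (hπ.comp measurable_fst))

lemma integral_aipw_sub_integral_eq_of_condIndepFunGiven [DecidableEq β] (hm : m ≤ m0)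
    (hX : Measurable[m] X) (hT : Measurable T) (hG : Measurable G)
    (hCI : CondIndepFunGiven m T G μ) {ψ : γ → ℝ} (hψ : Measurable ψ)
    (hZ : Integrable (fun ω => ψ (G ω)) μ) {π : 𝒳 → ℝ} (hπ : Measurable π) {c : ℝ} (hc : 0 < c)
    (hπc : ∀ x, c ≤ π x) {τ : 𝒳 → ℝ} (hτ : Measurable τ) (hτb : ∃ C, ∀ x, |τ x| ≤ C) :
    ∫ ω, ((if T ω = t then 1 else 0) * ψ (G ω) / π (X ω)
        + (1 - (if T ω = t then 1 else 0) / π (X ω)) * τ (X ω)) ∂μ - ∫ ω, ψ (G ω) ∂μ =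
      ∫ ω, (cprob m μ {ω | T ω = t} ω / π (X ω) - 1)
        * (cexp m μ (fun ω => ψ (G ω)) ω - τ (X ω)) ∂μ := by
  rw [integral_aipw_ite_eq_integral_aipw_cprob hm hX hT hG hCI hψ hZ hπ hc hπc hτ hτb]
  exact integral_aipw_sub_integral_eq_integral_mul_cexp_sub hm stronglyMeasurable_cprob
    (abs_cprob_le_one hm (hT (measurableSet_singleton t))) (hπ.comp hX).stronglyMeasurable hc
    (fun ω => hπc (X ω)) hZ (hτ.comp hX).stronglyMeasurable
    (integrable_comp_of_abs_le (hX.mono hm le_rfl) hτ hτb)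

end CondIndep

section Aipw

variable {Ω : Type*} {m0 : MeasurableSpace Ω} {μ : Measure Ω}

lemma integrable_aipw [IsFiniteMeasure μ] {a q Z W : Ω → ℝ} (ha : Measurable a)
    (ha1 : ∀ ω, |a ω| ≤ 1) (hq : Measurable q) {c : ℝ} (hc : 0 < c) (hqc : ∀ ω, c ≤ q ω)
    (hZ : Integrable Z μ) (hW : Integrable W μ) :
    Integrable (fun ω => a ω * Z ω / q ω + (1 - a ω / q ω) * W ω) μ := by
  refine (((hZ.sub hW).bdd_mul (ha.div hq).aestronglyMeasurable
    (.of_forall fun ω => abs_div_le_inv_of_abs_le_one (ha1 ω) hc (hqc ω))).add hW).congr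
    (.of_forall fun ω => ?_)
  simp only [Pi.add_apply, Pi.sub_apply, Pi.div_apply]
  ring

lemma integral_aipw_eq_of_indepFun {a Z W : Ω → ℝ} {p : ℝ}
    (ha : Integrable a μ) (hap : ∫ ω, a ω ∂μ = p) (hp : p ≠ 0) (hZ : Integrable Z μ)
    (hW : Integrable W μ) (haZ : IndepFun a Z μ) (haW : IndepFun a W μ) :
    ∫ ω, (a ω * Z ω / p + (1 - a ω / p) * W ω) ∂μ = ∫ ω, Z ω ∂μ := by
  have haZ' : Integrable (fun ω => a ω * Z ω) μ := haZ.integrable_mul ha hZ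
  have haW' : Integrable (fun ω => a ω * W ω) μ := haW.integrable_mul ha hW
  calc ∫ ω, (a ω * Z ω / p + (1 - a ω / p) * W ω) ∂μ
      = p⁻¹ * ∫ ω, a ω * Z ω ∂μ + ∫ ω, W ω ∂μ - p⁻¹ * ∫ ω, a ω * W ω ∂μ := by
        rw [← integral_const_mul, ← integral_const_mul,
          ← integral_add (haZ'.const_mul _) hW,
          ← integral_sub (by exact (haZ'.const_mul _).add hW) (haW'.const_mul _)]
        congr 1 with ω
        ring
    _ = ∫ ω, Z ω ∂μ := by
        rw [haZ.integral_fun_mul_eq_mul_integral ha.aestronglyMeasurable hZ.aestronglyMeasurable,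
          haW.integral_fun_mul_eq_mul_integral ha.aestronglyMeasurable hW.aestronglyMeasurable, hap]
        field_simp
        ring

lemma integral_aipw_ite_eq_of_indepFun [IsFiniteMeasure μ] {β δ : Type*} [MeasurableSpace β]
    [MeasurableSingletonClass β] [DecidableEq β] [MeasurableSpace δ] {T : Ω → β} {V : Ω → δ}
    (hT : Measurable T) (hTV : IndepFun T V μ) {t : β} (ht : μ {ω | T ω = t} ≠ 0)
    {ζ w : δ → ℝ} (hζ : Measurable ζ) (hw : Measurable w) (hZ : Integrable (fun ω => ζ (V ω)) μ)
    (hW : Integrable (fun ω => w (V ω)) μ) :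
    ∫ ω, ((if T ω = t then 1 else 0) * ζ (V ω) / (μ {ω | T ω = t}).toReal
        + (1 - (if T ω = t then 1 else 0) / (μ {ω | T ω = t}).toReal) * w (V ω)) ∂μ =
      ∫ ω, ζ (V ω) ∂μ := by
  have hA : MeasurableSet {ω | T ω = t} := hT (measurableSet_singleton t)
  have hφ : Measurable fun b : β => if b = t then (1 : ℝ) else 0 :=
    Measurable.ite (measurableSet_singleton t) measurable_const measurable_const
  refine integral_aipw_eq_of_indepFun
    (.of_bound (hφ.comp hT).aestronglyMeasurable 1
      (.of_forall fun _ => abs_ite_one_zero_le_one _)) ?_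
    (ENNReal.toReal_ne_zero.mpr ⟨ht, measure_ne_top _ _⟩) hZ hW (hTV.comp hφ hζ) (hTV.comp hφ hw)
  rw [← measureReal_def, ← integral_indicator_one hA]
  congr 1 with ω
  simp [indicator_apply]

end Aipw

theorem stmt4_general
    {Ω 𝒳 : Type*} [MeasurableSpace Ω] [MeasurableSpace 𝒳]
    (P : Measure Ω) [IsProbabilityMeasure P]
    (X : Ω → 𝒳) (R T Y₁ Y₀ Y : Ω → ℝ) (Yt : ℝ → Ω → ℝ)
    (hX : Measurable X) (hR : Measurable R) (hT : Measurable T)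
    (hY₁m : Measurable Y₁) (hY₀m : Measurable Y₀)
    (hRbin : ∀ ω, R ω = 0 ∨ R ω = 1)
    (hY₁2 : MemLp Y₁ 2 P) (hY₀2 : MemLp Y₀ 2 P)
    (hY : Y = fun ω => T ω * Y₁ ω + (1 - T ω) * Y₀ ω)
    (hYt1 : Yt 1 = Y₁) (hYt0 : Yt 0 = Y₀)
    (ε : ℝ) (hε : 0 < ε)
    (hlam_pos : 0 < P {ω | R ω = 1}) (hlam_lt : P {ω | R ω = 1} < 1)
    (hpi : ∀ r ∈ ({0, 1} : Set ℝ), ∀ t ∈ ({0, 1} : Set ℝ), ∀ᵐ ω ∂P,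
      ε ≤ cprob (sigmaX X) (ProbabilityTheory.cond P {ω' | R ω' = r}) {ω' | T ω' = t} ω ∧
      cprob (sigmaX X) (ProbabilityTheory.cond P {ω' | R ω' = r}) {ω' | T ω' = t} ω ≤ 1 - ε)
    (hA1 : IndepFun T (fun ω => (Y₁ ω, Y₀ ω, X ω)) (ProbabilityTheory.cond P {ω | R ω = 1}))
    (hA2 : CondIndepFunGiven (sigmaX X) T (fun ω => (Y₁ ω, Y₀ ω))
      (ProbabilityTheory.cond P {ω | R ω = 0}))
    (t : ℝ) (ht : t = 0 ∨ t = 1)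
    (πd : 𝒳 → ℝ) (hπdm : Measurable πd) (hπdr : ∀ x, πd x ∈ Set.Icc ε (1 - ε))
    (τd1 : 𝒳 → ℝ) (hτd1m : Measurable τd1) (hτd1b : ∃ C, ∀ x, |τd1 x| ≤ C)
    (τd0 : 𝒳 → ℝ) (hτd0m : Measurable τd0) (hτd0b : ∃ C, ∀ x, |τd0 x| ≤ C)
    :
    (∫ ω, ((if T ω = t then (1 : ℝ) else 0) * Y ω / (R ω * ((ProbabilityTheory.cond P {ω' | R ω' = 1}) {ω' | T ω' = t}).toReal + (1 - R ω) * πd (X ω))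
      + (1 - (if T ω = t then (1 : ℝ) else 0) / (R ω * ((ProbabilityTheory.cond P {ω' | R ω' = 1}) {ω' | T ω' = t}).toReal + (1 - R ω) * πd (X ω))) * (R ω * τd1 (X ω) + (1 - R ω) * τd0 (X ω))) ∂P) - (∫ ω', Yt t ω' ∂P)
      = ∫ ω, (1 - R ω) * (cprob (sigmaX X) (ProbabilityTheory.cond P {ω' | R ω' = 0}) {ω' | T ω' = t} ω / πd (X ω) - 1)
          * (cexp (sigmaX X) (ProbabilityTheory.cond P {ω' | R ω' = 0}) (Yt t) ω - τd0 (X ω)) ∂P := by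
  obtain ⟨ψ, hψ, hYt⟩ : ∃ ψ : ℝ × ℝ → ℝ, Measurable ψ ∧ Yt t = fun ω => ψ (Y₁ ω, Y₀ ω) := by
    rcases ht with rfl | rfl
    exacts [⟨Prod.snd, measurable_snd, hYt0⟩, ⟨Prod.fst, measurable_fst, hYt1⟩]
  have hZ : Integrable (fun ω => ψ (Y₁ ω, Y₀ ω)) P := by
    rw [← hYt]
    rcases ht with rfl | rfl
    exacts [hYt0 ▸ hY₀2.integrable one_le_two, hYt1 ▸ hY₁2.integrable one_le_two]
  have hA₁ : P {ω | R ω = 1} ≠ 0 := hlam_pos.ne'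
  have hA₀ : P {ω | R ω = 0} ≠ 0 := measure_setOf_eq_zero_ne_zero hR hRbin hlam_lt
  have := cond_isProbabilityMeasure hA₁
  have hp₁ : 0 < (P[|{ω | R ω = 1}] {ω | T ω = t}).toReal :=
    hε.trans_le <| le_measureReal_of_ae_le_cprob hX.comap_le (hT (measurableSet_singleton t))
      (cond_absolutelyContinuous.ae_le
        ((hpi 1 (by simp) t (by rcases ht with rfl | rfl <;> simp)).mono fun _ h => h.1))
  have htrial := integral_aipw_ite_eq_of_indepFun hT hA1 (ENNReal.toReal_pos_iff.mp hp₁).1.ne'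
    (ζ := fun v => ψ (v.1, v.2.1)) (w := fun v => τd1 v.2.2)
    (hψ.comp (measurable_fst.prodMk (measurable_fst.comp measurable_snd)))
    (hτd1m.comp (measurable_snd.comp measurable_snd))
    (hZ.cond hA₁) (integrable_comp_of_abs_le hX hτd1m hτd1b)
  have hobs := integral_aipw_sub_integral_eq_of_condIndepFunGiven (m := sigmaX X)
    (μ := P[|{ω | R ω = 0}]) (t := t) hX.comap_le (comap_measurable X) hT (hY₁m.prodMk hY₀m)
    hA2 hψ (hZ.cond hA₀) hπdm hε (fun x => (hπdr x).1) hτd0m hτd0b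
  have ha : Measurable fun ω => if T ω = t then (1 : ℝ) else 0 :=
    Measurable.ite (hT (measurableSet_singleton t)) measurable_const measurable_const
  have hF₁ := integrable_aipw (μ := P) ha (fun _ => abs_ite_one_zero_le_one _) measurable_const
    hp₁ (fun _ => le_rfl) hZ (integrable_comp_of_abs_le hX hτd1m hτd1b)
  have hF₀ := integrable_aipw (μ := P) (q := fun ω => πd (X ω)) ha
    (fun _ => abs_ite_one_zero_le_one _) (hπdm.comp hX) hε (fun ω => (hπdr (X ω)).1) hZ
    (integrable_comp_of_abs_le hX hτd0m hτd0b)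
  simp only [ite_mul_eq_ite_mul_of_consistency ht hY hYt1 hYt0, hYt]
  rw [integral_eq_cond_add_cond hR hRbin ?_ ?_ hF₁ hF₀,
    integral_eq_cond_add_cond hR hRbin (fun _ _ => rfl) (fun _ _ => rfl) hZ hZ]
  · simp_rw [mul_assoc (1 - R _)]
    rw [integral_one_sub_mul_eq_cond hR hRbin]
    linear_combination P.real {ω | R ω = 1} * htrial + P.real {ω | R ω = 0} * hobs
  all_goals
    intro ω h
    simp [h]

theorem stmt4
    {Ω 𝒳 : Type*} [MeasurableSpace Ω] [MeasurableSpace 𝒳] [StandardBorelSpace 𝒳]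
    (P : Measure Ω) [IsProbabilityMeasure P]
    (X : Ω → 𝒳) (R T Y₁ Y₀ Y : Ω → ℝ) (Yt : ℝ → Ω → ℝ)
    (hX : Measurable X) (hR : Measurable R) (hT : Measurable T)
    (hY₁m : Measurable Y₁) (hY₀m : Measurable Y₀)
    (hRbin : ∀ ω, R ω = 0 ∨ R ω = 1) (hTbin : ∀ ω, T ω = 0 ∨ T ω = 1)
    (hY₁2 : MemLp Y₁ 2 P) (hY₀2 : MemLp Y₀ 2 P)
    (hY : Y = fun ω => T ω * Y₁ ω + (1 - T ω) * Y₀ ω)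
    (hYt1 : Yt 1 = Y₁) (hYt0 : Yt 0 = Y₀)
    (ε : ℝ) (hε : 0 < ε)
    (hlam_pos : 0 < P {ω | R ω = 1}) (hlam_lt : P {ω | R ω = 1} < 1)
    (hlamX : ∀ᵐ ω ∂P, ε ≤ cprob (sigmaX X) P {ω' | R ω' = 1} ω ∧
      cprob (sigmaX X) P {ω' | R ω' = 1} ω ≤ 1 - ε)
    (hpi : ∀ r ∈ ({0, 1} : Set ℝ), ∀ t ∈ ({0, 1} : Set ℝ), ∀ᵐ ω ∂P,
      ε ≤ cprob (sigmaX X) (ProbabilityTheory.cond P {ω' | R ω' = r}) {ω' | T ω' = t} ω ∧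
      cprob (sigmaX X) (ProbabilityTheory.cond P {ω' | R ω' = r}) {ω' | T ω' = t} ω ≤ 1 - ε)
    (hA1 : IndepFun T (fun ω => (Y₁ ω, Y₀ ω, X ω)) (ProbabilityTheory.cond P {ω | R ω = 1}))
    (hA2 : CondIndepFunGiven (sigmaX X) T (fun ω => (Y₁ ω, Y₀ ω))
      (ProbabilityTheory.cond P {ω | R ω = 0}))
    (t : ℝ) (ht : t = 0 ∨ t = 1)
    (πd : 𝒳 → ℝ) (hπdm : Measurable πd) (hπdr : ∀ x, πd x ∈ Set.Icc ε (1 - ε))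
    (τd1 : 𝒳 → ℝ) (hτd1m : Measurable τd1) (hτd1b : ∃ C, ∀ x, |τd1 x| ≤ C)
    (τd0 : 𝒳 → ℝ) (hτd0m : Measurable τd0) (hτd0b : ∃ C, ∀ x, |τd0 x| ≤ C)
    :
    (∫ ω, ((if T ω = t then (1 : ℝ) else 0) * Y ω / (R ω * ((ProbabilityTheory.cond P {ω' | R ω' = 1}) {ω' | T ω' = t}).toReal + (1 - R ω) * πd (X ω))
      + (1 - (if T ω = t then (1 : ℝ) else 0) / (R ω * ((ProbabilityTheory.cond P {ω' | R ω' = 1}) {ω' | T ω' = t}).toReal + (1 - R ω) * πd (X ω))) * (R ω * τd1 (X ω) + (1 - R ω) * τd0 (X ω))) ∂P) - (∫ ω', Yt t ω' ∂P)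
      = ∫ ω, (1 - R ω) * (cprob (sigmaX X) (ProbabilityTheory.cond P {ω' | R ω' = 0}) {ω' | T ω' = t} ω / πd (X ω) - 1)
          * (cexp (sigmaX X) (ProbabilityTheory.cond P {ω' | R ω' = 0}) (Yt t) ω - τd0 (X ω)) ∂P :=
  stmt4_general P X R T Y₁ Y₀ Y Yt hX hR hT hY₁m hY₀m hRbin hY₁2 hY₀2 hY hYt1 hYt0 ε hε hlam_pos
    hlam_lt hpi hA1 hA2 t ht πd hπdm hπdr τd1 hτd1m hτd1b τd0 hτd0m hτd0b
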